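/- arXiv:2604.20426 — 2 statements merged into one kernel-verified Lean document; each statement's English description precedes it below -/
import Mathlib

section
/- Let G be the semidirect product (ZMod 3 × ZMod 3) ⋊ ZMod 4, where the generator 1 of ZMod 4 acts by the automorphism (x, y) ↦ (−y, x). If V is a nonzero finite-dimensional complex vector space and ρ : G → GL(V) is a representation that is irreducible (i.e., the only ρ(G)-invariant subspaces of V are 0 and V), then dim_ℂ V = 1 or dim_ℂ V = 4. -/
/-- The order-4 automorphism `(x, y) ↦ (-y, x)` of `ZMod 3 × ZMod 3`,
viewed as an automorphism of the corresponding multiplicative group. -/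
def rotAut : MulAut (Multiplicative (ZMod 3 × ZMod 3)) where
  toFun p := Multiplicative.ofAdd (-(Multiplicative.toAdd p).2, (Multiplicative.toAdd p).1)
  invFun p := Multiplicative.ofAdd ((Multiplicative.toAdd p).2, -(Multiplicative.toAdd p).1)
  left_inv p := by simp
  right_inv p := by simp
  map_mul' p q := by
    simp only [toAdd_mul, Prod.fst_add, Prod.snd_add, ← ofAdd_add]
    congr 1
    simp [Prod.ext_iff, neg_add, add_comm]

/-- The homomorphism `ZMod n → M` sending `1` to a fixed element `ψ` with `ψ ^ n = 1`. -/
def zmodPowHom (n : ℕ) [NeZero n] {M : Type*} [Monoid M] (ψ : M) (h : ψ ^ n = 1) :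
    Multiplicative (ZMod n) →* M where
  toFun k := ψ ^ (Multiplicative.toAdd k).val
  map_one' := by simp
  map_mul' a b := by
    have key : ∀ m : ℕ, ψ ^ (m % n) = ψ ^ m := by
      intro m
      conv_rhs => rw [← Nat.mod_add_div m n]
      rw [pow_add, pow_mul, h, one_pow, mul_one]
    show ψ ^ (Multiplicative.toAdd (a * b)).val = _
    rw [toAdd_mul, ZMod.val_add, key, pow_add]

lemma rotAut_pow_four : rotAut ^ 4 = 1 := by
  ext p
  all_goals
    rw [pow_succ, pow_succ, pow_succ, pow_one]
    simp only [MulAut.mul_apply, MulAut.one_apply]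
    simp [rotAut]

/-- The group `(ZMod 3 × ZMod 3) ⋊ ZMod 4`, where the generator `1` of `ZMod 4`
acts by the automorphism `(x, y) ↦ (-y, x)`; this is the group with GAP ID `[36,9]`. -/
abbrev G369 : Type :=
  SemidirectProduct (Multiplicative (ZMod 3 × ZMod 3)) (Multiplicative (ZMod 4))
    (zmodPowHom 4 rotAut rotAut_pow_four)

/-! The subgroup `N = C₃²` is normal and abelian, so its fixed space in `V` is invariant, hence `V`
or `0`. If it is `V`, the group acts through the abelian quotient `C₄`, and a common eigenvector
spans `V`. If it is `0`, a common eigenvector `v` of `N` has a nontrivial weight `χ`. Since `C₄`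
acts on `N` without fixed points, a nontrivial character of `N` is moved by every nontrivial
element of `C₄`, so the four translates of `v` under `C₄` have pairwise distinct weights. They are
therefore linearly independent, and their span is invariant, hence all of `V`. -/

open Module End Function SemidirectProduct

section CommutingEndomorphisms

variable {ι K V : Type*} [Field K] [AddCommGroup V] [Module K V]

theorem Module.End.exists_forall_apply_eq_smul_of_commute [IsAlgClosed K] [FiniteDimensional K V]
    [Nontrivial V] (f : ι → End K V) (hf : ∀ i j, Commute (f i) (f j)) :
    ∃ v : V, v ≠ 0 ∧ ∃ χ : ι → K, ∀ i, f i v = χ i • v := by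
  -- every `f i` is scalar on a minimal nonzero subspace invariant under all of them
  set S := {E : Submodule K V | E ≠ ⊥ ∧ ∀ i, ∀ v ∈ E, f i v ∈ E}
  obtain ⟨E, ⟨hE0, hEinv⟩, hmin⟩ :=
    wellFounded_lt.has_min S ⟨⊤, top_ne_bot, fun _ _ _ ↦ Submodule.mem_top⟩
  have hscalar (i : ι) : ∃ μ : K, ∀ v ∈ E, f i v = μ • v := by
    have := Submodule.nontrivial_iff_ne_bot.mpr hE0
    obtain ⟨μ, hμ⟩ := exists_eigenvalue ((f i).restrict (hEinv i))
    obtain ⟨u, hu⟩ := hμ.exists_hasEigenvector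
    have hE' : E ⊓ eigenspace (f i) μ ∈ S := by
      refine ⟨Submodule.ne_bot_iff _ |>.mpr ⟨u, ⟨u.2, ?_⟩, ?_⟩, fun j v hv ↦ ?_⟩
      · simpa using congrArg Subtype.val hu.apply_eq_smul
      · exact fun h ↦ hu.2 (Subtype.ext h)
      · obtain ⟨hvE, hv⟩ := Submodule.mem_inf.mp hv
        refine Submodule.mem_inf.mpr ⟨hEinv j v hvE, mem_eigenspace_iff.mpr ?_⟩
        rw [← Module.End.mul_apply, (hf i j).eq, Module.End.mul_apply, mem_eigenspace_iff.mp hv,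
          map_smul]
    have hEE : E ⊓ eigenspace (f i) μ = E := inf_le_left.eq_of_not_lt (hmin _ hE')
    exact ⟨μ, fun v hv ↦ mem_eigenspace_iff.mp (hEE.ge hv).2⟩
  choose χ hχ using hscalar
  obtain ⟨v, hvE, hv0⟩ := Submodule.exists_mem_ne_zero_of_ne_bot hE0
  exact ⟨v, hv0, χ, fun i ↦ hχ i v hvE⟩

theorem Module.End.linearIndependent_of_forall_apply_eq_smul {κ : Type*} (f : κ → End K V)
    (hf : ∀ i j, Commute (f i) (f j)) {χ : ι → κ → K} (hχ : Function.Injective χ) {v : ι → V}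
    (hv0 : ∀ i, v i ≠ 0) (hv : ∀ i k, f k (v i) = χ i k • v i) : LinearIndependent K v := by
  have hindep := (independent_iInf_maxGenEigenspace_of_forall_mapsTo f
    fun k l μ ↦ mapsTo_maxGenEigenspace_of_comm (hf l k) μ).comp hχ
  refine hindep.linearIndependent _ (fun i ↦ ?_) hv0
  simp only [comp_apply, Submodule.mem_iInf]
  exact fun k ↦ eigenspace_le_maxGenEigenspace (mem_eigenspace_iff.mpr (hv i k))

end CommutingEndomorphisms

theorem Representation.exists_monoidHom_forall_apply_eq_smul {N K V : Type*} [CommMonoid N]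
    [Field K] [IsAlgClosed K] [AddCommGroup V] [Module K V] [FiniteDimensional K V] [Nontrivial V]
    (σ : Representation K N V) : ∃ χ : N →* K, ∃ v : V, v ≠ 0 ∧ ∀ n, σ n v = χ n • v := by
  obtain ⟨v, hv0, χ, hχ⟩ := exists_forall_apply_eq_smul_of_commute σ
    fun m n ↦ by simp only [Commute, SemiconjBy, ← map_mul, mul_comm]
  have hsmul := smul_left_injective K hv0
  refine ⟨⟨⟨χ, hsmul ?_⟩, fun m n ↦ hsmul ?_⟩, v, hv0, hχ⟩
  · simp [← hχ]
  · show χ (m * n) • v = (χ m * χ n) • v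
    rw [← hχ, map_mul, Module.End.mul_apply, hχ, map_smul, hχ, smul_smul, mul_comm]

theorem MonoidHom.FixedPointFree.eq_one_of_forall_map_apply_eq {G M F : Type*} [Group G]
    [Finite G] [Monoid M] [FunLike F G G] [MonoidHomClass F G G] {φ : F} (hφ : FixedPointFree φ)
    {χ : G →* M} (hχ : ∀ g, χ (φ g) = χ g) : χ = 1 := by
  ext g
  obtain ⟨x, rfl⟩ := hφ.commutatorMap_surjective g
  rw [commutatorMap_apply, div_eq_mul_inv, map_mul, ← hχ x, ← map_mul, mul_inv_cancel, map_one,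
    one_apply]

theorem Submodule.apply_mem_span_of_forall_apply_mem_span {R M : Type*} [Semiring R]
    [AddCommMonoid M] [Module R M] {f : M →ₗ[R] M} {s : Set M} (h : ∀ x ∈ s, f x ∈ span R s) :
    ∀ w ∈ span R s, f w ∈ span R s :=
  fun _ hw ↦ (span_le (p := (span R s).comap f)).mpr h hw

section FixedPointFreeAction

variable {N H M : Type*} [Group N] [Finite N] [Group H] [Monoid M] {φ : H →* MulAut N}

theorem MonoidHom.injective_apply_inv_apply_of_fixedPointFree
    (hφ : ∀ h ≠ 1, FixedPointFree (φ h)) {χ : N →* M} (hχ : χ ≠ 1) :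
    Function.Injective fun h n ↦ χ ((φ h)⁻¹ n) := by
  intro h h' hhh'
  by_contra hne
  refine hχ ((hφ (h'⁻¹ * h) (by rwa [Ne, inv_mul_eq_one, eq_comm])).eq_one_of_forall_map_apply_eq
    fun n ↦ ?_)
  simpa [MulAut.mul_apply] using (congrFun hhh' (φ h n)).symm

end FixedPointFreeAction

namespace Representation

section SemidirectProduct

variable {K V N H : Type*} [Field K] [AddCommGroup V] [Module K V] [Group N] [Group H]
  {φ : H →* MulAut N} (ρ : Representation K (N ⋊[φ] H) V)

theorem apply_inl_apply_inr (n : N) (h : H) (v : V) :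
    ρ (inl n) (ρ (inr h) v) = ρ (inr h) (ρ (inl ((φ h)⁻¹ n)) v) := by
  simp only [inl_aut_inv, ← Module.End.mul_apply, ← map_mul]
  rw [← mul_assoc, ← mul_assoc, ← map_mul inr, mul_inv_cancel, map_one, one_mul]

theorem apply_mem_of_forall_inl_of_forall_inr {W : Submodule K V}
    (hN : ∀ n, ∀ v ∈ W, ρ (inl n) v ∈ W) (hH : ∀ h, ∀ v ∈ W, ρ (inr h) v ∈ W) (g : N ⋊[φ] H) :
    ∀ v ∈ W, ρ g v ∈ W := by
  intro v hv
  rw [← inl_left_mul_inr_right g, map_mul, Module.End.mul_apply]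
  exact hN _ _ (hH _ _ hv)

theorem apply_mem_invariants_comp_inl (g : N ⋊[φ] H) :
    ∀ v ∈ invariants (ρ.comp inl), ρ g v ∈ invariants (ρ.comp inl) := by
  refine ρ.apply_mem_of_forall_inl_of_forall_inr (fun n v hv ↦ ?_) (fun h v hv ↦ ?_) g
  · rwa [← (mem_invariants _ v).mp hv n] at hv
  · refine fun n ↦ ?_
    rw [MonoidHom.comp_apply, apply_inl_apply_inr]
    exact congrArg (ρ (inr h)) ((mem_invariants _ v).mp hv _)

variable {χ : N → K} {v : V} (hv : ∀ n, ρ (inl n) v = χ n • v)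
include hv

theorem apply_inl_apply_inr_eq_smul (n : N) (h : H) :
    ρ (inl n) (ρ (inr h) v) = χ ((φ h)⁻¹ n) • ρ (inr h) v := by
  rw [apply_inl_apply_inr, hv, map_smul]

theorem apply_mem_span_range_inr (g : N ⋊[φ] H) :
    ∀ w ∈ Submodule.span K (Set.range fun h ↦ ρ (inr h) v),
      ρ g w ∈ Submodule.span K (Set.range fun h ↦ ρ (inr h) v) := by
  refine ρ.apply_mem_of_forall_inl_of_forall_inr (fun n ↦ ?_) (fun h ↦ ?_) g <;>
    refine Submodule.apply_mem_span_of_forall_apply_mem_span ?_ <;>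
    rintro _ ⟨h', rfl⟩
  · rw [ρ.apply_inl_apply_inr_eq_smul hv]
    exact Submodule.smul_mem _ _ (Submodule.subset_span ⟨h', rfl⟩)
  · exact Submodule.subset_span ⟨h * h', by simp⟩

end SemidirectProduct

variable {K V : Type*} [Field K] [IsAlgClosed K] [AddCommGroup V] [Module K V]
  [FiniteDimensional K V] [Nontrivial V]

theorem finrank_eq_one_of_commute {G : Type*} [Monoid G] (ρ : Representation K G V)
    (hcomm : ∀ g g', Commute (ρ g) (ρ g'))
    (hirr : ∀ W : Submodule K V, (∀ g, ∀ v ∈ W, ρ g v ∈ W) → W = ⊥ ∨ W = ⊤) :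
    finrank K V = 1 := by
  obtain ⟨v, hv0, χ, hχ⟩ := Module.End.exists_forall_apply_eq_smul_of_commute ρ hcomm
  have hW (g : G) : ∀ w ∈ K ∙ v, ρ g w ∈ K ∙ v :=
    Submodule.apply_mem_span_of_forall_apply_mem_span fun x hx ↦ by
      rw [Set.mem_singleton_iff.mp hx, hχ]
      exact Submodule.smul_mem _ _ (Submodule.mem_span_singleton_self v)
  have htop : K ∙ v = ⊤ := (hirr _ hW).resolve_left (by simpa using hv0)
  rw [← finrank_top, ← htop, finrank_span_singleton hv0]

variable {N H : Type*} [CommGroup N] [Finite N]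

theorem finrank_eq_card_of_invariants_comp_inl_eq_bot [Group H] [Fintype H] {φ : H →* MulAut N}
    (hφ : ∀ h ≠ 1, MonoidHom.FixedPointFree (φ h)) (ρ : Representation K (N ⋊[φ] H) V)
    (hirr : ∀ W : Submodule K V, (∀ g, ∀ v ∈ W, ρ g v ∈ W) → W = ⊥ ∨ W = ⊤)
    (hN : invariants (ρ.comp inl) = ⊥) :
    finrank K V = Fintype.card H := by
  obtain ⟨χ, v, hv0, hv⟩ := exists_monoidHom_forall_apply_eq_smul (ρ.comp inl)
  have hχ : χ ≠ 1 := by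
    rintro rfl
    refine hv0 ((Submodule.mem_bot K).mp (hN ▸ (mem_invariants _ v).mpr fun n ↦ ?_))
    simpa using hv n
  set W := Submodule.span K (Set.range fun h ↦ ρ (inr h) v)
  have hWtop : W = ⊤ := (hirr W (ρ.apply_mem_span_range_inr hv)).resolve_left
    ((Submodule.ne_bot_iff W).mpr ⟨v, Submodule.subset_span ⟨1, by simp⟩, hv0⟩)
  have hli : LinearIndependent K fun h ↦ ρ (inr h) v := by
    refine Module.End.linearIndependent_of_forall_apply_eq_smul (fun n ↦ ρ (inl n))
      (fun m n ↦ ?_) (χ.injective_apply_inv_apply_of_fixedPointFree (φ := φ) hφ hχ)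
      (fun h h0 ↦ hv0 ?_) (fun h n ↦ ρ.apply_inl_apply_inr_eq_smul hv n h)
    · simp only [Commute, SemiconjBy, ← map_mul, mul_comm]
    · simpa [← Module.End.mul_apply, ← map_mul] using congrArg (ρ (inr h⁻¹)) h0
  rw [← finrank_top, ← hWtop, finrank_span_eq_card hli]

theorem finrank_eq_one_or_card_of_fixedPointFree [CommGroup H] [Fintype H] {φ : H →* MulAut N}
    (hφ : ∀ h ≠ 1, MonoidHom.FixedPointFree (φ h)) (ρ : Representation K (N ⋊[φ] H) V)
    (hirr : ∀ W : Submodule K V, (∀ g, ∀ v ∈ W, ρ g v ∈ W) → W = ⊥ ∨ W = ⊤) :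
    finrank K V = 1 ∨ finrank K V = Fintype.card H := by
  rcases hirr _ ρ.apply_mem_invariants_comp_inl with hbot | htop
  · exact .inr (ρ.finrank_eq_card_of_invariants_comp_inl_eq_bot hφ hirr hbot)
  · have hρ (g : N ⋊[φ] H) : ρ g = ρ (inr g.right) := by
      have hinl : ρ (inl g.left) = 1 :=
        LinearMap.ext fun v ↦ (mem_invariants _ v).mp (htop ▸ Submodule.mem_top) g.left
      conv_lhs => rw [← inl_left_mul_inr_right g, map_mul, hinl, one_mul]
    refine .inl (ρ.finrank_eq_one_of_commute (fun g g' ↦ ?_) hirr)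
    simp only [hρ g, hρ g', Commute, SemiconjBy, ← map_mul, mul_comm]

end Representation

theorem fixedPointFree_zmodPowHom_rotAut :
    ∀ h ≠ 1, MonoidHom.FixedPointFree (zmodPowHom 4 rotAut rotAut_pow_four h) := by
  unfold MonoidHom.FixedPointFree
  decide

/-- Every irreducible complex representation of `(ZMod 3 × ZMod 3) ⋊ ZMod 4`
(GAP ID `[36,9]`) has dimension `1` or `4`. -/
theorem irrep_dim_G369 (V : Type) [AddCommGroup V] [Module ℂ V]
    [FiniteDimensional ℂ V] [Nontrivial V]
    (ρ : G369 →* LinearMap.GeneralLinearGroup ℂ V)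
    (hirr : ∀ W : Submodule ℂ V,
      (∀ (g : G369), ∀ v ∈ W, ((ρ g : V →ₗ[ℂ] V) v) ∈ W) → W = ⊥ ∨ W = ⊤) :
    Module.finrank ℂ V = 1 ∨ Module.finrank ℂ V = 4 := by
  simpa using Representation.finrank_eq_one_or_card_of_fixedPointFree
    fixedPointFree_zmodPowHom_rotAut ((Units.coeHom _).comp ρ) hirr
end

section
/- Let G be the semidirect product (ZMod 3 × ZMod 3) ⋊ ZMod 4, where the generator 1 of ZMod 4 acts by the automorphism (x, y) ↦ (−y, x). Then for every n ≤ 3 there is no injective group homomorphism from G into GL(n, ℂ); equivalently, every faithful complex representation of G has dimension at least 4. -/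
/-!
Let `A = C₃²` be the normal subgroup and `g` the generator of `C₄`. Since `g²` acts on `A` as
inversion, every `a ∈ A` is conjugate to `a⁻¹ = a²`, so in a representation `ρ` the matrix
`X = ρ a` (which satisfies `X³ = 1`) has equally many eigenvalues `ω` and `ω²`. If `ρ` is faithful
of dimension `n ≤ 3`, this forces the spectrum of `X` to be `{1, …, 1, ω, ω²}` for `a ≠ 1`, so
`tr X = n - 3`. Summing the character over `A` gives `n + 8 (n - 3) = 9 n - 24`, which must be
`9` times the dimension of the `A`-invariants; but `9 ∤ 24`.
-/

theorem IsPrimitiveRoot.one_add_self_add_sq_eq_zero {R : Type*} [CommRing R] [IsDomain R] {ω : R}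
    (hω : IsPrimitiveRoot ω 3) : 1 + ω + ω ^ 2 = 0 := by
  simpa [Finset.sum_range_succ] using hω.geom_sum_eq_zero (by norm_num)

section Algebra

variable {K A : Type*} [Field K] [Ring A] [Algebra K A]

/-- For `x ^ 3 = 1` and `ζ ^ 3 = 1`, the projection `(1 + ζ⁻¹ x + ζ⁻² x²) / 3` onto the
`ζ`-eigenspace of `x`. -/
def cubeEigenProj (ζ : K) (x : A) : A := (3 : K)⁻¹ • (1 + ζ ^ 2 • x + ζ • x ^ 2)

variable {ζ : K} {x : A}

theorem mul_cubeEigenProj (hx : x ^ 3 = 1) (hζ : ζ ^ 3 = 1) :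
    x * cubeEigenProj ζ x = ζ • cubeEigenProj ζ x := by
  have hx3 : x * x ^ 2 = 1 := by rw [← pow_succ', hx]
  simp only [cubeEigenProj, mul_smul_comm, mul_add, mul_one, hx3, ← sq]
  rw [smul_comm ζ]
  congr 1
  match_scalars <;> grind

theorem isIdempotentElem_cubeEigenProj [NeZero (3 : K)] (hx : x ^ 3 = 1) (hζ : ζ ^ 3 = 1) :
    IsIdempotentElem (cubeEigenProj ζ x) := by
  have hx2 : x * x = x ^ 2 := (sq x).symm
  have hx3 : x * x ^ 2 = 1 := by rw [← pow_succ', hx]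
  have hx3' : x ^ 2 * x = 1 := by rw [← pow_succ, hx]
  have hx4 : x ^ 2 * x ^ 2 = x := by
    rw [← pow_add, show 2 + 2 = 3 + 1 by rfl, pow_succ, hx, one_mul]
  rw [IsIdempotentElem, cubeEigenProj, smul_mul_smul_comm]
  simp only [add_mul, mul_add, one_mul, mul_one, smul_mul_smul_comm, hx2, hx4, hx3, hx3']
  have h3 : (3 : K) ≠ 0 := NeZero.ne 3
  match_scalars <;> grind

theorem cubeEigenProj_add_add [NeZero (3 : K)] {ω : K} (hω : IsPrimitiveRoot ω 3) :
    cubeEigenProj (1 : K) x + cubeEigenProj ω x + cubeEigenProj (ω ^ 2) x = 1 := by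
  have hsum := hω.one_add_self_add_sq_eq_zero
  have hω3 : ω ^ 3 = 1 := hω.pow_eq_one
  have h3 : (3 : K) ≠ 0 := NeZero.ne 3
  unfold cubeEigenProj
  match_scalars <;> grind

theorem eq_one_of_cubeEigenProj_eq_zero [NeZero (3 : K)] {ω : K} (hω : IsPrimitiveRoot ω 3)
    (hx : x ^ 3 = 1) (hω₁ : cubeEigenProj ω x = 0) (hω₂ : cubeEigenProj (ω ^ 2) x = 0) :
    x = 1 := by
  have h1 : cubeEigenProj (1 : K) x = 1 := by
    simpa [hω₁, hω₂] using cubeEigenProj_add_add (x := x) hω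
  simpa [h1] using mul_cubeEigenProj (ζ := (1 : K)) hx (one_pow 3)

theorem isIdempotentElem_average {H : Type*} [Group H] [Fintype H]
    [NeZero (Fintype.card H : K)] (f : H →* A) :
    IsIdempotentElem ((Fintype.card H : K)⁻¹ • ∑ h, f h) := by
  have hmul (g : H) : f g * ∑ h, f h = ∑ h, f h := by
    simp_rw [Finset.mul_sum, ← map_mul]
    exact Equiv.sum_comp (Equiv.mulLeft g) f
  have hc : (Fintype.card H : K) ≠ 0 := NeZero.ne _
  rw [IsIdempotentElem, smul_mul_smul_comm, Finset.sum_mul,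
    Finset.sum_congr rfl fun g _ => hmul g, Finset.sum_const, Finset.card_univ,
    ← Nat.cast_smul_eq_nsmul K, smul_smul, mul_assoc, inv_mul_cancel₀ hc, mul_one]

end Algebra

namespace Matrix

variable {K ι : Type*} [Field K] [Fintype ι] [DecidableEq ι]

theorem IsIdempotentElem.trace_eq_rank {P : Matrix ι ι K} (hP : IsIdempotentElem P) :
    P.trace = P.rank := by
  have h : IsIdempotentElem (toLin' P) := hP.map toLinAlgEquiv'
  rw [← trace_toLin'_eq, (LinearMap.IsIdempotentElem.isProj_range _ h).trace, toLin'_apply']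
  rfl

theorem IsIdempotentElem.eq_zero_of_trace_eq_zero [CharZero K] {P : Matrix ι ι K}
    (hP : IsIdempotentElem P) (h0 : P.trace = 0) : P = 0 := by
  have h : IsIdempotentElem (toLin' P) := hP.map toLinAlgEquiv'
  rw [← trace_toLin'_eq] at h0
  simpa using LinearMap.IsIdempotentElem.eq_zero_of_trace_eq_zero h h0

theorem trace_cubeEigenProj (ζ : K) (X : Matrix ι ι K) :
    (cubeEigenProj ζ X).trace =
      3⁻¹ * (Fintype.card ι + ζ ^ 2 * X.trace + ζ * (X ^ 2).trace) := by
  simp only [cubeEigenProj, trace_smul, trace_add, trace_one, smul_eq_mul]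

theorem trace_eq_card_sub_three_of_pow_three_eq_one [CharZero K] {ω : K}
    (hω : IsPrimitiveRoot ω 3) (hcard : Fintype.card ι ≤ 3) {X : Matrix ι ι K}
    (hX : X ^ 3 = 1) (hX1 : X ≠ 1) (htr : (X ^ 2).trace = X.trace) :
    X.trace = Fintype.card ι - 3 := by
  have hsum := hω.one_add_self_add_sq_eq_zero
  have hω3 : ω ^ 3 = 1 := hω.pow_eq_one
  have hω₂3 : (ω ^ 2) ^ 3 = 1 := by rw [← pow_mul, pow_mul', hω3, one_pow]
  have hE (ζ : K) (hζ : ζ ^ 3 = 1) : IsIdempotentElem (cubeEigenProj ζ X) :=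
    isIdempotentElem_cubeEigenProj hX hζ
  have hk := IsIdempotentElem.trace_eq_rank (hE ω hω3)
  have hk₂ := IsIdempotentElem.trace_eq_rank (hE _ hω₂3)
  have hr := IsIdempotentElem.trace_eq_rank (hE 1 (one_pow 3))
  rw [trace_cubeEigenProj, htr] at hk hk₂ hr
  -- `r` and `k` are the multiplicities of the eigenvalues `1` and `ω` of `X`; by `htr`, `ω²` also
  -- has multiplicity `k`.
  set k := (cubeEigenProj ω X).rank
  set r := (cubeEigenProj (1 : K) X).rank
  have hτ : X.trace = Fintype.card ι - 3 * k := by linear_combination -3 * hk + X.trace * hsum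
  have hrk : r + 2 * k = Fintype.card ι := by
    have : ((r + 2 * k : ℕ) : K) = Fintype.card ι := by
      push_cast
      linear_combination -hr + (2 / 3) * hτ
    exact_mod_cast this
  have hk_ne : k ≠ 0 := by
    intro hk0
    have hk_zero : (k : K) = 0 := by rw [hk0, Nat.cast_zero]
    apply hX1
    refine eq_one_of_cubeEigenProj_eq_zero hω hX ?_ ?_
    · refine IsIdempotentElem.eq_zero_of_trace_eq_zero (hE ω hω3) ?_
      rw [trace_cubeEigenProj, htr, hk, hk_zero]
    · refine IsIdempotentElem.eq_zero_of_trace_eq_zero (hE _ hω₂3) ?_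
      rw [trace_cubeEigenProj, htr]
      linear_combination hk + hk_zero + 3⁻¹ * X.trace * ω * hω3
  rw [hτ, show k = 1 by omega, Nat.cast_one, mul_one]

theorem exists_sum_trace_eq_card_mul [CharZero K] {H : Type*} [Group H] [Fintype H]
    (f : H →* Matrix ι ι K) :
    ∃ d : ℕ, ∑ h, (f h).trace = Fintype.card H * d := by
  have hc : (Fintype.card H : K) ≠ 0 := Nat.cast_ne_zero.mpr Fintype.card_ne_zero
  have : NeZero (Fintype.card H : K) := ⟨hc⟩
  refine ⟨((Fintype.card H : K)⁻¹ • ∑ h, f h).rank, ?_⟩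
  rw [← IsIdempotentElem.trace_eq_rank (isIdempotentElem_average f), trace_smul,
    trace_sum, smul_eq_mul, mul_inv_cancel_left₀ hc]

end Matrix

namespace G369

open SemidirectProduct

abbrev Translations : Type := Multiplicative (ZMod 3 × ZMod 3)

theorem pow_three_eq_one : ∀ a : Translations, a ^ 3 = 1 := by decide

theorem card_translations : Fintype.card Translations = 9 := rfl

theorem action_two_eq_inv :
    ∀ a : Translations, zmodPowHom 4 rotAut rotAut_pow_four (.ofAdd 2) a = a⁻¹ := by decide

theorem inl_inv_eq_conj (a : Translations) :
    (inl a⁻¹ : G369) = inr (.ofAdd 2) * inl a * (inr (.ofAdd 2))⁻¹ := by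
  rw [← action_two_eq_inv, inl_aut, map_inv inr]

theorem trace_inl_of_ne_one {n : ℕ} (hn : n ≤ 3) {ρ : G369 →* GL (Fin n) ℂ}
    (hρ : Function.Injective ρ) {a : Translations} (ha : a ≠ 1) :
    (ρ (inl a) : Matrix (Fin n) (Fin n) ℂ).trace = n - 3 := by
  set X := (ρ (inl a) : Matrix (Fin n) (Fin n) ℂ)
  have hX : X ^ 3 = 1 := by
    rw [← Units.val_pow_eq_pow_val, ← map_pow, ← map_pow, pow_three_eq_one, map_one, map_one,
      Units.val_one]
  have hX1 : X ≠ 1 := by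
    intro h
    refine ha (inl_injective (hρ ?_))
    rw [map_one, map_one]
    exact Units.ext h
  have htr : (X ^ 2).trace = X.trace := by
    have hsq : a ^ 2 = a⁻¹ := eq_inv_of_mul_eq_one_left (by rw [← pow_succ, pow_three_eq_one])
    rw [← Units.val_pow_eq_pow_val, ← map_pow, ← map_pow, hsq, inl_inv_eq_conj, map_mul, map_mul,
      map_inv]
    exact Matrix.trace_units_conj _ _
  simpa using Matrix.trace_eq_card_sub_three_of_pow_three_eq_one
    (Complex.isPrimitiveRoot_exp 3 (by norm_num)) (by simpa using hn) hX hX1 htr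

end G369

/-- The group `(ZMod 3 × ZMod 3) ⋊ ZMod 4` (GAP ID `[36,9]`) admits no faithful complex
representation of dimension at most 3: for every `n ≤ 3` there is no injective group
homomorphism into `GL(n, ℂ)`. -/
theorem no_faithful_small_rep_G369 (n : ℕ) (hn : n ≤ 3)
    (ρ : G369 →* Matrix.GeneralLinearGroup (Fin n) ℂ) :
    ¬ Function.Injective ρ := by
  intro hρ
  let f : G369.Translations →* Matrix (Fin n) (Fin n) ℂ :=
    (Units.coeHom _).comp (ρ.comp SemidirectProduct.inl)
  have htr (a : G369.Translations) (ha : a ≠ 1) : (f a).trace = n - 3 :=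
    G369.trace_inl_of_ne_one hn hρ ha
  have hsum : ∑ a, (f a).trace = n + 8 * (n - 3) := by
    rw [← Finset.add_sum_erase _ _ (Finset.mem_univ 1),
      Finset.sum_congr rfl fun a ha => htr a (Finset.ne_of_mem_erase ha), map_one,
      Matrix.trace_one, Fintype.card_fin, Finset.sum_const,
      Finset.card_erase_of_mem (Finset.mem_univ 1), Finset.card_univ, G369.card_translations,
      nsmul_eq_mul]
    norm_num
  obtain ⟨d, hd⟩ := Matrix.exists_sum_trace_eq_card_mul f
  rw [G369.card_translations] at hd
  have h9 : ((9 * d + 24 : ℕ) : ℂ) = (9 * n : ℕ) := by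
    push_cast
    linear_combination hsum - hd
  have := Nat.cast_injective h9
  omega
end
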